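/- Let n ≥ 4 be an integer, let φ = 400000·n², let r = (n−3)/n, and let i be an integer with 1 ≤ i and i + 1 ≤ n. Then for all reals s₁, …, s_{n+3} ∈ [0, 1/φ], w ∈ [−r^{2i−1}, −r^{2i−1} + 1/φ], t ∈ [−1/φ, 0], p₁, …, p_{2n+6} ∈ [0, 1/φ], w' ∈ [−r^{2i−1}, −r^{2i−1} + 1/φ], and q ∈ [−r^{2i}, −r^{2i} + 1/φ]: (w + ∑_{j=1}^{n+3} s_j + t)/(n+5) < (w' + q + ∑_{j=1}^{2n+6} p_j)/(2n+8). In particular (worst case) (−r^{2i−1} + (n+4)/φ)/(n+5) < (−r^{2i−1} − r^{2i})/(2n+8). -/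

import Mathlib

/-!
Both means are monotone in every edge cost, so it suffices to compare the worst cases:
`C₁` with all costs at their maxima and `C₂` with all costs at their minima. Writing
`R = r^(2i-1)`, so that `r^(2i) = R r`, the worst-case inequality rearranges to
`2n(n+4)²/φ < R (n+15)`, which holds as soon as `R ≥ 1/40000`. Since `r ≤ 1` and
`2i - 1 ≤ 2n - 3`, this follows from `r^(2n-3) ≥ e^(-21/2) > 1/40000` for `n ≥ 5`, using
`1/r = 1 + 3/(n-3) ≤ e^(3/(n-3))`; for `n = 4` it is `4^(-5) ≥ 1/40000`.
-/

open Real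

lemma exp_twentyOne_div_two_lt : exp (21 / 2) < 40000 := by
  have h21 : exp 21 < 2.7182818286 ^ 21 := by
    rw [show (21 : ℝ) = (21 : ℕ) * 1 by norm_num, exp_nat_mul]
    exact pow_lt_pow_left₀ exp_one_lt_d9 (exp_pos 1).le (by norm_num)
  have hsq : exp (21 / 2) ^ 2 = exp 21 := by
    rw [← exp_nat_mul]; norm_num
  nlinarith [exp_pos (21 / 2)]

lemma exp_neg_div_le_div_add {a b : ℝ} (ha : 0 ≤ a) (hb : 0 < b) :
    exp (-(a / b)) ≤ b / (b + a) := by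
  rw [exp_neg, inv_le_comm₀ (exp_pos _) (by positivity), inv_div, add_div, div_self hb.ne',
    add_comm]
  exact add_one_le_exp _

lemma inv_40000_le_sub_three_div_pow {n : ℕ} (hn : 4 ≤ n) :
    1 / 40000 ≤ (((n : ℝ) - 3) / n) ^ (2 * n - 3) := by
  obtain rfl | hn5 := hn.eq_or_lt
  · norm_num
  have hm : (2 : ℝ) ≤ n - 3 := by
    have : (5 : ℝ) ≤ n := by exact_mod_cast hn5
    linarith
  have hr : exp (-(3 / ((n : ℝ) - 3))) ≤ ((n : ℝ) - 3) / n := by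
    simpa using exp_neg_div_le_div_add (a := 3) (b := (n : ℝ) - 3) (by norm_num) (by linarith)
  have hexponent : -(21 / 2) ≤ -(3 / ((n : ℝ) - 3)) * ((2 * n - 3 : ℕ) : ℝ) := by
    rw [Nat.cast_sub (by omega), neg_mul, neg_le_neg_iff, div_mul_eq_mul_div,
      div_le_iff₀ (by linarith)]
    push_cast
    linarith
  calc 1 / 40000 ≤ exp (-(21 / 2)) := by
        rw [exp_neg, one_div, inv_le_inv₀ (by norm_num) (exp_pos _)]
        exact exp_twentyOne_div_two_lt.le
    _ ≤ exp (-(3 / ((n : ℝ) - 3)) * ((2 * n - 3 : ℕ) : ℝ)) := exp_le_exp.mpr hexponent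
    _ = exp (-(3 / ((n : ℝ) - 3))) ^ (2 * n - 3) := by rw [mul_comm, exp_nat_mul]
    _ ≤ (((n : ℝ) - 3) / n) ^ (2 * n - 3) := pow_le_pow_left₀ (exp_pos _).le hr _

lemma worst_case_mean_lt {n R : ℝ} (hn : 4 ≤ n) (hR : 1 / 40000 ≤ R) :
    (-R + (n + 4) / (400000 * n ^ 2)) / (n + 5) < (-R - R * ((n - 3) / n)) / (2 * n + 8) := by
  have hn0 : 0 < n := by linarith
  rw [div_lt_div_iff₀ (by linarith) (by linarith)]
  -- the difference of the two sides is `R (n + 15) / n - 2 (n + 4)² / (400000 n²)`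
  have hgap : (n + 4) / (400000 * n ^ 2) * (2 * n + 8) < R * ((n + 15) / n) := by
    rw [div_mul_eq_mul_div, mul_div_assoc', div_lt_div_iff₀ (by positivity) hn0]
    nlinarith [mul_le_mul_of_nonneg_right hR (by positivity : (0 : ℝ) ≤ (n + 15) * n ^ 2)]
  have hsplit : (-R - R * ((n - 3) / n)) * (n + 5) = -R * (2 * n + 8 - (n + 15) / n) := by
    field_simp; ring
  rw [hsplit]
  nlinarith

/-- Lemma 15: in the instance `H` (with `φ = 400000·n²`, `r = (n−3)/n`), the
`(n+5)`-edge cycle `C₁ = (b,xᵢ,c,v,u,b)` has lower mean cost than the `(2n+8)`-edge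
cycle `C₂ = (b,xᵢ,c,v,d,w_{i+1},a,u,b)`, for every realization of the edge costs in
their intervals. -/
theorem stmt16 (n : ℕ) (hn : 4 ≤ n) (φ r : ℝ)
    (hφ : φ = 400000 * (n : ℝ) ^ 2) (hr : r = ((n : ℝ) - 3) / n)
    (i : ℕ) (hi1 : 1 ≤ i) (hin : i + 1 ≤ n) :
    (∀ (s : Fin (n + 3) → ℝ) (w t : ℝ) (p : Fin (2 * n + 6) → ℝ) (w' q : ℝ),
        (∀ j, s j ∈ Set.Icc (0 : ℝ) (1 / φ)) →
        w ∈ Set.Icc (-r ^ (2 * i - 1)) (-r ^ (2 * i - 1) + 1 / φ) →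
        t ∈ Set.Icc (-(1 / φ)) (0 : ℝ) →
        (∀ j, p j ∈ Set.Icc (0 : ℝ) (1 / φ)) →
        w' ∈ Set.Icc (-r ^ (2 * i - 1)) (-r ^ (2 * i - 1) + 1 / φ) →
        q ∈ Set.Icc (-r ^ (2 * i)) (-r ^ (2 * i) + 1 / φ) →
        (w + ∑ j, s j + t) / ((n : ℝ) + 5) < (w' + q + ∑ j, p j) / (2 * (n : ℝ) + 8))
    ∧ (-r ^ (2 * i - 1) + ((n : ℝ) + 4) / φ) / ((n : ℝ) + 5) <
        (-r ^ (2 * i - 1) - r ^ (2 * i)) / (2 * (n : ℝ) + 8) := by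
  have hn4 : (4 : ℝ) ≤ n := by exact_mod_cast hn
  have hr0 : 0 ≤ r := hr ▸ div_nonneg (by linarith) (by linarith)
  have hr1 : r ≤ 1 := hr ▸ div_le_one_of_le₀ (by linarith) (by linarith)
  have hR : 1 / 40000 ≤ r ^ (2 * i - 1) :=
    (hr ▸ inv_40000_le_sub_three_div_pow hn).trans (pow_le_pow_of_le_one hr0 hr1 (by omega))
  have hpow : r ^ (2 * i) = r ^ (2 * i - 1) * r := by rw [← pow_succ]; congr 1; omega
  have hworst : (-r ^ (2 * i - 1) + ((n : ℝ) + 4) / φ) / ((n : ℝ) + 5) <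
      (-r ^ (2 * i - 1) - r ^ (2 * i)) / (2 * (n : ℝ) + 8) := by
    rw [hpow, hφ, hr]
    exact worst_case_mean_lt hn4 (hr ▸ hR)
  refine ⟨fun s w t p w' q hs hw ht hp hw' hq => ?_, hworst⟩
  have hs_sum : ∑ j, s j ≤ ((n : ℝ) + 3) * (1 / φ) := by
    simpa using Finset.sum_le_card_nsmul Finset.univ s _ fun j _ => (hs j).2
  have hp_sum : 0 ≤ ∑ j, p j := Finset.sum_nonneg fun j _ => (hp j).1
  have hφ0 : 0 < φ := by rw [hφ]; positivity
  calc (w + ∑ j, s j + t) / ((n : ℝ) + 5)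
      ≤ (-r ^ (2 * i - 1) + ((n : ℝ) + 4) / φ) / ((n : ℝ) + 5) := by
        gcongr ?_ / _
        rw [show ((n : ℝ) + 4) / φ = ((n : ℝ) + 3) * (1 / φ) + 1 / φ by ring]
        linarith [hw.2, ht.2]
    _ < (-r ^ (2 * i - 1) - r ^ (2 * i)) / (2 * (n : ℝ) + 8) := hworst
    _ ≤ (w' + q + ∑ j, p j) / (2 * (n : ℝ) + 8) := by
        gcongr ?_ / _
        linarith [hw'.1, hq.1]
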